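/- Assume V satisfies (V1)–(V3) and A satisfies the Class 1 condition (A1)–(A2). Let (U_m) ⊂ Γ satisfy J_A(U_m) → Θ_A and −1 ≤ U_m ≤ 1 almost everywhere, and let k(m) ∈ ℤ with k(m) → +∞. Set Q_m(x,y) = U_m(x − k(m), y) and suppose Q_m ⇀ W weakly in W^{1,2}((k,k+1)×D) for every k ∈ ℤ and Q_m → W almost everywhere in Ω. Then J_{A_p}(W) ≤ Θ_A. -/

import Mathlib

/-! Translating both `U_m` and `A` by `-k(m)` leaves the energy unchanged, and the translated
coefficients converge pointwise to `A_p`, since `A - A_p → 0` at infinity while `A_p` is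
`1`-periodic. On each slab `(j, j + 1) × D` the Dirichlet energy is weakly lower semicontinuous
(test the weak convergence against truncations of the limit gradient), and Fatou's lemma for
series adds these slab inequalities up; the potential term is handled by Fatou's lemma and the
a.e. convergence. Hence `J_{A_p}(W) ≤ liminf J_A(U_m) = Θ_A`. -/

open MeasureTheory Filter Topology
open scoped ENNReal

noncomputable section

namespace Het

variable {d : ℕ}

/-- Points of the infinite cylinder `ℝ × ℝ^d`. -/
abbrev Pt (d : ℕ) := ℝ × EuclideanSpace ℝ (Fin d)

/-- The infinite cylinder `Ω = ℝ × D`. -/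
def Omeg (D : Set (EuclideanSpace ℝ (Fin d))) : Set (Pt d) := Set.univ ×ˢ D

/-- The slab `(a,b) × D`. -/
def slab (a b : ℝ) (D : Set (EuclideanSpace ℝ (Fin d))) : Set (Pt d) := Set.Ioo a b ×ˢ D

/-- `Ω₁ = (0,1) × D`. -/
def Omeg1 (D : Set (EuclideanSpace ℝ (Fin d))) : Set (Pt d) := slab 0 1 D

/-- The translate `(P_k U)(x,y) = U(x+k,y)`. -/
def Ptr (k : ℤ) (U : Pt d → ℝ) : Pt d → ℝ := fun p => U (p.1 + (k : ℝ), p.2)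

/-- Squared euclidean norm of the (classical) gradient of `U`:
`|∇U|² = (∂ₓU)² + Σᵢ (∂_{yᵢ}U)²`. -/
def gradSq (U : Pt d → ℝ) (p : Pt d) : ℝ :=
  (fderiv ℝ U p (1, 0)) ^ 2 +
    ∑ i : Fin d, (fderiv ℝ U p (0, EuclideanSpace.single i 1)) ^ 2

/-- Pointwise inner product `∇U · ∇W`. -/
def gradDot (U W : Pt d → ℝ) (p : Pt d) : ℝ :=
  fderiv ℝ U p (1, 0) * fderiv ℝ W p (1, 0) +
    ∑ i : Fin d, fderiv ℝ U p (0, EuclideanSpace.single i 1) *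
      fderiv ℝ W p (0, EuclideanSpace.single i 1)

/-- The Laplacian `ΔU = ∂ₓₓU + Σᵢ ∂_{yᵢyᵢ}U`. -/
def lapl (U : Pt d → ℝ) (p : Pt d) : ℝ :=
  fderiv ℝ (fun q => fderiv ℝ U q (1, 0)) p (1, 0) +
    ∑ i : Fin d, fderiv ℝ (fun q => fderiv ℝ U q (0, EuclideanSpace.single i 1)) p
      (0, EuclideanSpace.single i 1)

/-- The `L²` norm of `f` over `S`. -/
def l2norm (S : Set (Pt d)) (f : Pt d → ℝ) : ℝ := Real.sqrt (∫ p in S, f p ^ 2)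

/-- `U ∈ W^{1,2}_loc(Ω)` : on every slab `(k,k+1) × D`, `U` and its gradient
are square integrable. -/
def W12loc (D : Set (EuclideanSpace ℝ (Fin d))) (U : Pt d → ℝ) : Prop :=
  ∀ k : ℤ, MemLp U 2 (volume.restrict (slab (k : ℝ) ((k : ℝ) + 1) D)) ∧
    IntegrableOn (gradSq U) (slab (k : ℝ) ((k : ℝ) + 1) D)

/-- The class `Γ`. -/
def InGamma (D : Set (EuclideanSpace ℝ (Fin d))) (U : Pt d → ℝ) : Prop :=
  W12loc D U ∧ IntegrableOn (gradSq U) (Omeg D) ∧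
  Tendsto (fun k : ℤ => l2norm (Omeg1 D) (fun p => Ptr k U p - 1)) atBot (nhds 0) ∧
  Tendsto (fun k : ℤ => l2norm (Omeg1 D) (fun p => Ptr k U p + 1)) atTop (nhds 0)

/-- The energy functional `J_B(U) = ∫_Ω (½|∇U|² + B(x,y) V(U))`, valued in `[0,∞]`. -/
def Jfun (D : Set (EuclideanSpace ℝ (Fin d))) (B : Pt d → ℝ) (V : ℝ → ℝ)
    (U : Pt d → ℝ) : ℝ≥0∞ :=
  ∫⁻ p in Omeg D, ENNReal.ofReal (2⁻¹ * gradSq U p + B p * V (U p))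

/-- `Θ_B = inf { J_B(U) : U ∈ Γ }`. -/
def Theta (D : Set (EuclideanSpace ℝ (Fin d))) (B : Pt d → ℝ) (V : ℝ → ℝ) : ℝ≥0∞ :=
  ⨅ (U : Pt d → ℝ) (_ : InGamma D U), Jfun D B V U

/-- Conditions (V1)–(V3) on the double well potential. -/
def Vconds (V : ℝ → ℝ) : Prop :=
  ContDiff ℝ 1 V ∧ V (-1) = 0 ∧ V 1 = 0 ∧ (∀ t, 0 ≤ V t) ∧
    ∀ t, t ≠ -1 → t ≠ 1 → 0 < V t

/-- `D` is a bounded domain: open, bounded and nonempty. -/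
def NiceDomain (D : Set (EuclideanSpace ℝ (Fin d))) : Prop :=
  IsOpen D ∧ Bornology.IsBounded D ∧ D.Nonempty

/-- The filter `|(x,y)| → ∞`. -/
def atInfty (d : ℕ) : Filter (Pt d) := Filter.comap (fun p : Pt d => ‖p‖) Filter.atTop

/-- `ν` is the outward unit normal vector to `∂D` at `y`. -/
def OutwardNormal (D : Set (EuclideanSpace ℝ (Fin d))) (y ν : EuclideanSpace ℝ (Fin d)) :
    Prop :=
  ‖ν‖ = 1 ∧ ∃ ε > 0, ∀ t : ℝ, 0 < t → t < ε → y + t • ν ∉ closure D ∧ y - t • ν ∈ D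

/-- The Neumann boundary condition `∂u/∂ν = 0` on `ℝ × ∂D`. -/
def NeumannBC (D : Set (EuclideanSpace ℝ (Fin d))) (U : Pt d → ℝ) : Prop :=
  ∀ (x : ℝ) (y ν : EuclideanSpace ℝ (Fin d)), y ∈ frontier D → OutwardNormal D y ν →
    fderiv ℝ U (x, y) (0, ν) = 0

/-- `u` is a heteroclinic solution from `1` to `-1` of `-Δu + B(x,y)V'(u) = 0` in `Ω`
with the Neumann boundary condition, with limits uniform in `y ∈ D`. -/
def IsHeteroclinic (D : Set (EuclideanSpace ℝ (Fin d))) (B : Pt d → ℝ) (V : ℝ → ℝ)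
    (u : Pt d → ℝ) : Prop :=
  ContDiffOn ℝ 2 u (closure (Omeg D)) ∧
  (∀ p ∈ Omeg D, -lapl u p + B p * deriv V (u p) = 0) ∧
  NeumannBC D u ∧
  (∀ ε > 0, ∃ R : ℝ, ∀ x : ℝ, ∀ y ∈ D,
    (x ≤ -R → |u (x, y) - 1| < ε) ∧ (R ≤ x → |u (x, y) + 1| < ε))

/-- Class 1: `A` is `C¹`, asymptotic at infinity to a `1`-periodic (in `x`) `C¹`
function `Ap` (condition (A1)), with `0 < A0 = inf_Ω A ≤ A < Ap` on `Ω` (condition (A2)). -/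
def Class1 (D : Set (EuclideanSpace ℝ (Fin d))) (A Ap : Pt d → ℝ) (A0 : ℝ) : Prop :=
  ContDiffOn ℝ 1 A (closure (Omeg D)) ∧ ContDiffOn ℝ 1 Ap (closure (Omeg D)) ∧
  (∀ p : Pt d, Ap (p.1 + 1, p.2) = Ap p) ∧
  Tendsto (fun p : Pt d => A p - Ap p) (atInfty d) (nhds 0) ∧
  0 < A0 ∧ IsGLB (A '' Omeg D) A0 ∧
  ∀ p ∈ Omeg D, A p < Ap p

/-- Class 2 (Rabinowitz): `A` is `C¹` and
`0 < A0 = A(0,y) = inf_Ω A < liminf_{|(x,y)|→∞} A = A∞ < ∞` for all `y ∈ D`. -/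
def Class2 (D : Set (EuclideanSpace ℝ (Fin d))) (A : Pt d → ℝ) (A0 Ainf : ℝ) : Prop :=
  ContDiffOn ℝ 1 A (closure (Omeg D)) ∧
  0 < A0 ∧ (∀ y ∈ D, A ((0 : ℝ), y) = A0) ∧ IsGLB (A '' Omeg D) A0 ∧
  A0 < Ainf ∧ Filter.liminf A (atInfty d) = Ainf

/-- The rescaled coefficient `(x,y) ↦ A(εx, y)`. -/
def scaleA (ε : ℝ) (A : Pt d → ℝ) : Pt d → ℝ := fun p => A (ε * p.1, p.2)

/-- Truncation of `U` to `[-1,1]`. -/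
def truncU (U : Pt d → ℝ) : Pt d → ℝ := fun p => max (-1) (min 1 (U p))

/-- Weak convergence in `L²(S)`. -/
def WeakL2 (S : Set (Pt d)) (f : ℕ → Pt d → ℝ) (g : Pt d → ℝ) : Prop :=
  ∀ φ : Pt d → ℝ, MemLp φ 2 (volume.restrict S) →
    Tendsto (fun n => ∫ p in S, f n p * φ p) atTop (nhds (∫ p in S, g p * φ p))

/-- Weak convergence in `W^{1,2}(S)`: weak `L²` convergence of the functions and of
all their (weak) partial derivatives. -/
def WeakW12 (S : Set (Pt d)) (f : ℕ → Pt d → ℝ) (g : Pt d → ℝ) : Prop :=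
  WeakL2 S f g ∧
  WeakL2 S (fun n p => fderiv ℝ (f n) p (1, 0)) (fun p => fderiv ℝ g p (1, 0)) ∧
  ∀ i : Fin d, WeakL2 S (fun n p => fderiv ℝ (f n) p (0, EuclideanSpace.single i 1))
    (fun p => fderiv ℝ g p (0, EuclideanSpace.single i 1))

end Het

namespace ENNReal

theorem tsum_liminf_le_liminf_tsum {ι : Type*} [Countable ι] (a : ι → ℕ → ℝ≥0∞) :
    ∑' i, liminf (a i) atTop ≤ liminf (fun m => ∑' i, a i m) atTop := by
  -- Fatou's lemma for the counting measure
  let : MeasurableSpace ι := ⊤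
  have : DiscreteMeasurableSpace ι := ⟨fun _ => trivial⟩
  simpa only [lintegral_count] using
    lintegral_liminf_le (μ := Measure.count) (f := fun m i => a i m) fun _ => .of_discrete

theorem le_liminf_add (u v : ℕ → ℝ≥0∞) :
    liminf u atTop + liminf v atTop ≤ liminf (fun m => u m + v m) atTop := by
  simpa [tsum_bool, add_comm] using tsum_liminf_le_liminf_tsum fun b : Bool => if b then v else u

end ENNReal

namespace MeasureTheory

variable {α : Type*} [MeasurableSpace α] {μ : Measure α}

theorem lintegral_iUnion_le_liminf {ι : Type*} [Countable ι] {s : ι → Set α}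
    (hs : ∀ i, MeasurableSet (s i)) (hd : Pairwise (Function.onFun Disjoint s)) {f : α → ℝ≥0∞}
    {F : ℕ → α → ℝ≥0∞}
    (h : ∀ i, ∫⁻ x in s i, f x ∂μ ≤ liminf (fun m => ∫⁻ x in s i, F m x ∂μ) atTop) :
    ∫⁻ x in ⋃ i, s i, f x ∂μ ≤ liminf (fun m => ∫⁻ x in ⋃ i, s i, F m x ∂μ) atTop := by
  simp only [lintegral_iUnion hs hd]
  exact (ENNReal.tsum_le_tsum h).trans (ENNReal.tsum_liminf_le_liminf_tsum _)

theorem lintegral_le_liminf_of_ae_tendsto {f : α → ℝ≥0∞} {F : ℕ → α → ℝ≥0∞}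
    (hF : ∀ m, AEMeasurable (F m) μ) (h : ∀ᵐ x ∂μ, Tendsto (F · x) atTop (𝓝 (f x))) :
    ∫⁻ x, f x ∂μ ≤ liminf (fun m => ∫⁻ x, F m x ∂μ) atTop :=
  calc ∫⁻ x, f x ∂μ = ∫⁻ x, liminf (F · x) atTop ∂μ :=
        lintegral_congr_ae (h.mono fun _ hx => hx.liminf_eq.symm)
    _ ≤ _ := lintegral_liminf_le' hF

theorem ofReal_two_mul_integral_sub_le_lintegral {f φ : α → ℝ} (hφ : MemLp φ 2 μ) :
    ENNReal.ofReal (2 * ∫ x, f x * φ x ∂μ - ∫ x, φ x ^ 2 ∂μ) ≤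
      ∫⁻ x, ENNReal.ofReal (f x ^ 2) ∂μ := by
  by_cases hfφ : Integrable (fun x => f x * φ x) μ
  · have hint : Integrable (fun x => 2 * (f x * φ x) - φ x ^ 2) μ :=
      (hfφ.const_mul 2).sub hφ.integrable_sq
    have hpos : ∫ x, (2 * (f x * φ x) - φ x ^ 2) ∂μ ≤
        (∫⁻ x, ENNReal.ofReal (2 * (f x * φ x) - φ x ^ 2) ∂μ).toReal := by
      rw [integral_eq_lintegral_pos_part_sub_lintegral_neg_part hint]
      linarith [ENNReal.toReal_nonneg (a := ∫⁻ x, ENNReal.ofReal (-(2 * (f x * φ x) - φ x ^ 2)) ∂μ)]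
    rw [← integral_const_mul, ← integral_sub (hfφ.const_mul 2) hφ.integrable_sq]
    refine (ENNReal.ofReal_le_of_le_toReal hpos).trans (lintegral_mono fun x => ?_)
    exact ENNReal.ofReal_le_ofReal (by nlinarith [sq_nonneg (f x - φ x)])
  · rw [integral_undef hfφ, ENNReal.ofReal_of_nonpos]
    · exact zero_le
    · linarith [integral_nonneg (μ := μ) (f := fun x => φ x ^ 2) fun x => sq_nonneg (φ x)]

theorem lintegral_sq_le_liminf_of_weak [IsFiniteMeasure μ] {f : ℕ → α → ℝ} {g : α → ℝ}
    (hg : Measurable g)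
    (hfg : ∀ φ, MemLp φ 2 μ →
      Tendsto (fun m => ∫ x, f m x * φ x ∂μ) atTop (𝓝 (∫ x, g x * φ x ∂μ))) :
    ∫⁻ x, ENNReal.ofReal (g x ^ 2) ∂μ ≤
      liminf (fun m => ∫⁻ x, ENNReal.ofReal (f m x ^ 2) ∂μ) atTop := by
  -- test against the truncations `φ R = g 𝟙_{|g| ≤ R}`: they lie in `L²` and `g φ R = (φ R)²`
  set φ : ℕ → α → ℝ := fun R => {x | |g x| ≤ R}.indicator g
  have hφm (R : ℕ) : Measurable (φ R) :=
    hg.indicator (measurableSet_le hg.abs measurable_const)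
  have hφL2 (R : ℕ) : MemLp (φ R) 2 μ := by
    refine MemLp.of_bound (hφm R).aestronglyMeasurable R (ae_of_all _ fun x => ?_)
    simp only [φ, Set.indicator_apply, Set.mem_ofPred_eq, Real.norm_eq_abs]
    split_ifs with h <;> simp [h]
  have hgφ (R : ℕ) (x : α) : g x * φ R x = φ R x ^ 2 := by
    simp only [φ, Set.indicator_apply, Set.mem_ofPred_eq]
    split_ifs <;> ring
  have htrunc (R : ℕ) : ∫⁻ x, ENNReal.ofReal (φ R x ^ 2) ∂μ ≤
      liminf (fun m => ∫⁻ x, ENNReal.ofReal (f m x ^ 2) ∂μ) atTop := by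
    have hlim := (ENNReal.continuous_ofReal.tendsto _).comp
      (((hfg _ (hφL2 R)).const_mul 2).sub_const (∫ x, φ R x ^ 2 ∂μ))
    rw [← ofReal_integral_eq_lintegral_ofReal (hφL2 R).integrable_sq
      (ae_of_all _ fun x => sq_nonneg _)]
    calc ENNReal.ofReal (∫ x, φ R x ^ 2 ∂μ)
        = ENNReal.ofReal (2 * ∫ x, g x * φ R x ∂μ - ∫ x, φ R x ^ 2 ∂μ) := by
          simp only [hgφ]; ring_nf
      _ = liminf (fun m => ENNReal.ofReal (2 * ∫ x, f m x * φ R x ∂μ - ∫ x, φ R x ^ 2 ∂μ))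
          atTop := hlim.liminf_eq.symm
      _ ≤ _ := liminf_le_liminf (.of_forall fun m =>
          ofReal_two_mul_integral_sub_le_lintegral (hφL2 R))
  have hconv (x : α) :
      Tendsto (fun R => ENNReal.ofReal (φ R x ^ 2)) atTop (𝓝 (ENNReal.ofReal (g x ^ 2))) :=
    tendsto_const_nhds.congr' <| (eventually_ge_atTop ⌈|g x|⌉₊).mono fun R hR => by
      dsimp only [φ]
      rw [Set.indicator_of_mem (s := {x | |g x| ≤ R}) (Nat.ceil_le.mp hR)]
  calc ∫⁻ x, ENNReal.ofReal (g x ^ 2) ∂μ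
      ≤ liminf (fun R => ∫⁻ x, ENNReal.ofReal (φ R x ^ 2) ∂μ) atTop :=
        lintegral_le_liminf_of_ae_tendsto
          (fun R => ((hφm R).pow_const 2).ennreal_ofReal.aemeasurable) (ae_of_all _ hconv)
    _ ≤ _ := liminf_le_of_le (by isBoundedDefault) fun b hb => by
        obtain ⟨R, hR⟩ := hb.exists
        exact hR.trans (htrunc R)

end MeasureTheory

namespace Het

section

variable {d : ℕ} {D : Set (EuclideanSpace ℝ (Fin d))}

theorem measurableSet_Omeg (hD : MeasurableSet D) : MeasurableSet (Omeg D) :=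
  MeasurableSet.univ.prod hD

theorem measurableSet_slab (hD : MeasurableSet D) (a b : ℝ) : MeasurableSet (slab a b D) :=
  measurableSet_Ioo.prod hD

theorem volume_slab_lt_top (hD : Bornology.IsBounded D) (a b : ℝ) : volume (slab a b D) < ∞ := by
  rw [slab, Measure.volume_eq_prod, Measure.prod_prod]
  exact ENNReal.mul_lt_top (by simp) hD.measure_lt_top

theorem pairwise_disjoint_slab :
    Pairwise (Function.onFun Disjoint fun j : ℤ => slab (j : ℝ) ((j : ℝ) + 1) D) := by
  intro i j hij
  refine Set.disjoint_left.mpr fun p ⟨⟨hi₁, hi₂⟩, _⟩ ⟨⟨hj₁, hj₂⟩, _⟩ => hij ?_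
  have h₁ : i < j + 1 := by exact_mod_cast hi₁.trans hj₂
  have h₂ : j < i + 1 := by exact_mod_cast hj₁.trans hi₂
  omega

theorem restrict_Omeg_eq_restrict_iUnion_slab :
    volume.restrict (Omeg D) = volume.restrict (⋃ j : ℤ, slab (j : ℝ) ((j : ℝ) + 1) D) := by
  -- the slabs miss only the null set `ℤ × D`
  have hsub : Omeg D \ ⋃ j : ℤ, slab (j : ℝ) ((j : ℝ) + 1) D ⊆
      Set.range ((↑) : ℤ → ℝ) ×ˢ Set.univ := by
    rintro p ⟨hp, hnot⟩
    refine ⟨⟨⌊p.1⌋, by_contra fun hne => hnot (Set.mem_iUnion.mpr ⟨⌊p.1⌋, ⟨?_, hp.2⟩⟩)⟩, trivial⟩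
    exact ⟨(Int.floor_le p.1).lt_of_ne hne, Int.lt_floor_add_one p.1⟩
  have hnull :
      volume (Set.range ((↑) : ℤ → ℝ) ×ˢ (Set.univ : Set (EuclideanSpace ℝ (Fin d)))) = 0 := by
    rw [Measure.volume_eq_prod, Measure.prod_prod, (Set.countable_range _).measure_zero, zero_mul]
  refine Measure.restrict_congr_set (ae_eq_set.mpr ⟨measure_mono_null hsub hnull, ?_⟩)
  rw [Set.sdiff_eq_empty.mpr (Set.iUnion_subset fun j p hp => show p ∈ Omeg D from ⟨trivial, hp.2⟩),
    measure_empty]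

theorem measurePreserving_add_fst_Omeg (v : ℝ) :
    MeasurePreserving (· + ((v, 0) : Pt d)) (volume.restrict (Omeg D))
      (volume.restrict (Omeg D)) := by
  have hmp : MeasurePreserving (· + ((v, 0) : Pt d)) volume volume := by
    have : (· + ((v, 0) : Pt d)) = Prod.map (· + v) id := funext fun p => Prod.ext rfl (add_zero _)
    rw [this]
    exact (measurePreserving_add_right volume v).prod (MeasurePreserving.id volume)
  have hpre : (· + ((v, 0) : Pt d)) ⁻¹' Omeg D = Omeg D := by
    ext p
    simp [Omeg]
  simpa only [hpre] using
    hmp.restrict_preimage_emb (MeasurableEquiv.addRight _).measurableEmbedding (Omeg D)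

theorem Ptr_eq_comp_add (c : ℤ) (U : Pt d → ℝ) : Ptr c U = fun p => U (p + ((c : ℝ), 0)) := by
  funext p
  exact congrArg U (Prod.ext rfl (add_zero p.2).symm)

theorem gradSq_Ptr (c : ℤ) (U : Pt d → ℝ) (p : Pt d) :
    gradSq (Ptr c U) p = gradSq U (p + ((c : ℝ), 0)) := by
  rw [Ptr_eq_comp_add, gradSq, gradSq, fderiv_comp_add_right]

theorem Jfun_Ptr (c : ℤ) (B U : Pt d → ℝ) (V : ℝ → ℝ) :
    Jfun D (Ptr c B) V (Ptr c U) = Jfun D B V U := by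
  refine Eq.trans (lintegral_congr fun p => ?_)
    ((measurePreserving_add_fst_Omeg c).lintegral_comp_emb
      (MeasurableEquiv.addRight _).measurableEmbedding _)
  rw [gradSq_Ptr, Ptr_eq_comp_add c B, Ptr_eq_comp_add c U]

theorem aemeasurable_Ptr {U : Pt d → ℝ} (hU : AEMeasurable U (volume.restrict (Omeg D))) (c : ℤ) :
    AEMeasurable (Ptr c U) (volume.restrict (Omeg D)) := by
  rw [Ptr_eq_comp_add]
  exact hU.comp_quasiMeasurePreserving (measurePreserving_add_fst_Omeg c).quasiMeasurePreserving

theorem W12loc.aemeasurable {U : Pt d → ℝ} (hU : W12loc D U) :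
    AEMeasurable U (volume.restrict (Omeg D)) := by
  rw [restrict_Omeg_eq_restrict_iUnion_slab, aemeasurable_iUnion_iff]
  exact fun j => (hU j).1.aestronglyMeasurable.aemeasurable

theorem measurable_gradSq (U : Pt d → ℝ) : Measurable (gradSq U) :=
  ((measurable_fderiv_apply_const ℝ U _).pow_const 2).add
    (Finset.measurable_sum _ fun _ _ => (measurable_fderiv_apply_const ℝ U _).pow_const 2)

theorem gradSq_nonneg (U : Pt d → ℝ) (p : Pt d) : 0 ≤ gradSq U p := by
  unfold gradSq
  positivity

theorem Jfun_eq_add (hD : MeasurableSet D) {B U : Pt d → ℝ} {V : ℝ → ℝ}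
    (hB : ∀ p ∈ Omeg D, 0 ≤ B p) (hV : ∀ t, 0 ≤ V t) :
    Jfun D B V U = (∫⁻ p in Omeg D, ENNReal.ofReal (2⁻¹ * gradSq U p)) +
      ∫⁻ p in Omeg D, ENNReal.ofReal (B p * V (U p)) := by
  rw [Jfun, ← lintegral_add_left ((measurable_gradSq U).const_mul 2⁻¹).ennreal_ofReal]
  refine setLIntegral_congr_fun (measurableSet_Omeg hD) fun p hp => ENNReal.ofReal_add ?_ ?_
  · exact mul_nonneg (by norm_num) (gradSq_nonneg U p)
  · exact mul_nonneg (hB p hp) (hV _)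

theorem lintegral_gradSq_le_liminf_of_weakW12 {S : Set (Pt d)} (hS : volume S ≠ ∞)
    {f : ℕ → Pt d → ℝ} {g : Pt d → ℝ} (h : WeakW12 S f g) :
    ∫⁻ p in S, ENNReal.ofReal (gradSq g p) ≤
      liminf (fun m => ∫⁻ p in S, ENNReal.ofReal (gradSq (f m) p)) atTop := by
  have : IsFiniteMeasure (volume.restrict S) := isFiniteMeasure_restrict.mpr hS
  obtain ⟨-, hx, hy⟩ := h
  have hsplit (U : Pt d → ℝ) : ∫⁻ p in S, ENNReal.ofReal (gradSq U p) =
      (∫⁻ p in S, ENNReal.ofReal (fderiv ℝ U p (1, 0) ^ 2)) +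
        ∑ i : Fin d, ∫⁻ p in S,
          ENNReal.ofReal (fderiv ℝ U p (0, EuclideanSpace.single i 1) ^ 2) := by
    rw [← lintegral_finsetSum _ fun i _ =>
        ((measurable_fderiv_apply_const ℝ U _).pow_const 2).ennreal_ofReal,
      ← lintegral_add_left ((measurable_fderiv_apply_const ℝ U _).pow_const 2).ennreal_ofReal]
    refine lintegral_congr fun p => ?_
    rw [gradSq, ENNReal.ofReal_add (sq_nonneg _) (by positivity),
      ENNReal.ofReal_sum_of_nonneg fun i _ => sq_nonneg _]
  simp only [hsplit]
  calc _ ≤ liminf (fun m => ∫⁻ p in S, ENNReal.ofReal (fderiv ℝ (f m) p (1, 0) ^ 2)) atTop +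
        ∑ i : Fin d, liminf (fun m => ∫⁻ p in S,
          ENNReal.ofReal (fderiv ℝ (f m) p (0, EuclideanSpace.single i 1) ^ 2)) atTop :=
        add_le_add (lintegral_sq_le_liminf_of_weak (measurable_fderiv_apply_const ℝ g _) hx)
          (Finset.sum_le_sum fun i _ =>
            lintegral_sq_le_liminf_of_weak (measurable_fderiv_apply_const ℝ g _) (hy i))
    _ ≤ _ := by
        refine (add_le_add le_rfl ?_).trans (ENNReal.le_liminf_add _ _)
        simpa only [tsum_fintype] using ENNReal.tsum_liminf_le_liminf_tsum (ι := Fin d) _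

theorem lintegral_Omeg_half_gradSq_le_liminf (hD : MeasurableSet D) (hDb : Bornology.IsBounded D)
    {f : ℕ → Pt d → ℝ} {g : Pt d → ℝ}
    (h : ∀ j : ℤ, WeakW12 (slab (j : ℝ) ((j : ℝ) + 1) D) f g) :
    ∫⁻ p in Omeg D, ENNReal.ofReal (2⁻¹ * gradSq g p) ≤
      liminf (fun m => ∫⁻ p in Omeg D, ENNReal.ofReal (2⁻¹ * gradSq (f m) p)) atTop := by
  simp only [ENNReal.ofReal_mul (by norm_num : (0 : ℝ) ≤ 2⁻¹),
    lintegral_const_mul' _ _ ENNReal.ofReal_ne_top,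
    ENNReal.liminf_const_mul_of_ne_top ENNReal.ofReal_ne_top, restrict_Omeg_eq_restrict_iUnion_slab]
  gcongr
  exact lintegral_iUnion_le_liminf (fun j => measurableSet_slab hD _ _) pairwise_disjoint_slab
    fun j => lintegral_gradSq_le_liminf_of_weakW12 (volume_slab_lt_top hDb _ _).ne (h j)

section Class1

variable {A Ap : Pt d → ℝ} {A0 : ℝ}

theorem Class1.nonneg (hA : Class1 D A Ap A0) {p : Pt d} (hp : p ∈ Omeg D) : 0 ≤ A p := by
  obtain ⟨-, -, -, -, hA0, hglb, -⟩ := hA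
  exact hA0.le.trans (hglb.1 ⟨p, hp, rfl⟩)

theorem Class1.periodic_nonneg (hA : Class1 D A Ap A0) {p : Pt d} (hp : p ∈ Omeg D) :
    0 ≤ Ap p := by
  obtain ⟨-, -, -, -, -, -, hlt⟩ := id hA
  exact (hA.nonneg hp).trans (hlt p hp).le

theorem Class1.tendsto_Ptr (hA : Class1 D A Ap A0) {k : ℕ → ℤ} (hk : Tendsto k atTop atTop)
    (p : Pt d) : Tendsto (fun m => Ptr (-k m) A p) atTop (𝓝 (Ap p)) := by
  obtain ⟨-, -, hper, hlim, -⟩ := hA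
  have hperiodic (m : ℕ) : Ap (p.1 + ((-k m : ℤ) : ℝ), p.2) = Ap p := by
    simpa using (show Function.Periodic (fun t => Ap (t, p.2)) 1 from
      fun t => hper (t, p.2)).int_mul (-k m) p.1
  have hfar : Tendsto (fun m => ((p.1 + ((-k m : ℤ) : ℝ), p.2) : Pt d)) atTop (atInfty d) := by
    rw [atInfty, tendsto_comap_iff]
    refine tendsto_atTop_mono (fun m => ?_)
      (tendsto_atTop_add_const_right _ (-p.1) (tendsto_intCast_atTop_atTop.comp hk))
    calc ((k m : ℤ) : ℝ) + -p.1 ≤ |p.1 + ((-k m : ℤ) : ℝ)| := by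
          push_cast; linarith [neg_le_abs (p.1 + -(k m : ℝ))]
      _ ≤ ‖((p.1 + ((-k m : ℤ) : ℝ), p.2) : Pt d)‖ := by
          simpa only [Real.norm_eq_abs] using norm_fst_le ((p.1 + ((-k m : ℤ) : ℝ), p.2) : Pt d)
  have := (hlim.comp hfar).add_const (Ap p)
  rw [zero_add] at this
  refine this.congr fun m => ?_
  simp only [Function.comp_apply, hperiodic, sub_add_cancel, Ptr]

theorem Class1.lintegral_potential_le_liminf (hD : MeasurableSet D) (hA : Class1 D A Ap A0)
    {V : ℝ → ℝ} (hV : Continuous V) {k : ℕ → ℤ} (hk : Tendsto k atTop atTop)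
    {U : ℕ → Pt d → ℝ} (hU : ∀ m, AEMeasurable (U m) (volume.restrict (Omeg D))) {W : Pt d → ℝ}
    (hae : ∀ᵐ p ∂(volume.restrict (Omeg D)),
      Tendsto (fun m => Ptr (-k m) (U m) p) atTop (𝓝 (W p))) :
    ∫⁻ p in Omeg D, ENNReal.ofReal (Ap p * V (W p)) ≤
      liminf (fun m => ∫⁻ p in Omeg D,
        ENNReal.ofReal (Ptr (-k m) A p * V (Ptr (-k m) (U m) p))) atTop := by
  have hAcont (c : ℤ) : ContinuousOn (Ptr c A) (Omeg D) := by
    rw [Ptr_eq_comp_add]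
    exact (hA.1.continuousOn.mono subset_closure).comp (continuous_add_const _).continuousOn
      fun p hp => ⟨trivial, by simpa using hp.2⟩
  refine lintegral_le_liminf_of_ae_tendsto (fun m => ?_) (hae.mono fun p hp => ?_)
  · exact ENNReal.measurable_ofReal.comp_aemeasurable (((hAcont _).aemeasurable
      (measurableSet_Omeg hD)).mul (hV.measurable.comp_aemeasurable (aemeasurable_Ptr (hU m) _)))
  · exact (ENNReal.continuous_ofReal.tendsto _).comp
      ((hA.tendsto_Ptr hk p).mul ((hV.tendsto _).comp hp))

end Class1

end

theorem statement18_general (N : ℕ)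
    (D : Set (EuclideanSpace ℝ (Fin (N - 1)))) (hD : NiceDomain D)
    (V : ℝ → ℝ) (hV : Vconds V)
    (A Ap : Pt (N - 1) → ℝ) (A0 : ℝ) (hA : Class1 D A Ap A0)
    (Useq : ℕ → Pt (N - 1) → ℝ) (hG : ∀ m, InGamma D (Useq m))
    (hJ : Tendsto (fun m => Jfun D A V (Useq m)) atTop (nhds (Theta D A V)))
    (k : ℕ → ℤ) (hk : Tendsto k atTop atTop)
    (W : Pt (N - 1) → ℝ)
    (hweak : ∀ j : ℤ, WeakW12 (slab (j : ℝ) ((j : ℝ) + 1) D)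
      (fun m => Ptr (-(k m)) (Useq m)) W)
    (hae : ∀ᵐ p ∂(volume.restrict (Omeg D)),
      Tendsto (fun m => Ptr (-(k m)) (Useq m) p) atTop (nhds (W p))) :
    Jfun D Ap V W ≤ Theta D A V := by
  obtain ⟨hDo, hDb, -⟩ := hD
  obtain ⟨hVc, -, -, hV0, -⟩ := hV
  have hDm := hDo.measurableSet
  have hJm (m : ℕ) : Jfun D A V (Useq m) =
      (∫⁻ p in Omeg D, ENNReal.ofReal (2⁻¹ * gradSq (Ptr (-k m) (Useq m)) p)) +
        ∫⁻ p in Omeg D, ENNReal.ofReal (Ptr (-k m) A p * V (Ptr (-k m) (Useq m) p)) := by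
    rw [← Jfun_Ptr (-k m)]
    exact Jfun_eq_add hDm (fun p hp => hA.nonneg (p := (_, p.2)) ⟨trivial, hp.2⟩) hV0
  calc Jfun D Ap V W
      = (∫⁻ p in Omeg D, ENNReal.ofReal (2⁻¹ * gradSq W p)) +
          ∫⁻ p in Omeg D, ENNReal.ofReal (Ap p * V (W p)) :=
        Jfun_eq_add hDm (fun p hp => hA.periodic_nonneg hp) hV0
    _ ≤ liminf (fun m => Jfun D A V (Useq m)) atTop := by
        simp only [hJm]
        exact (add_le_add (lintegral_Omeg_half_gradSq_le_liminf hDm hDb hweak)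
          (hA.lintegral_potential_le_liminf hDm hVc.continuous hk
            (fun m => (hG m).1.aemeasurable) hae)).trans (ENNReal.le_liminf_add _ _)
    _ = Theta D A V := hJ.liminf_eq

theorem statement18 (N : ℕ) (hN : 2 ≤ N)
    (D : Set (EuclideanSpace ℝ (Fin (N - 1)))) (hD : NiceDomain D)
    (V : ℝ → ℝ) (hV : Vconds V)
    (A Ap : Pt (N - 1) → ℝ) (A0 : ℝ) (hA : Class1 D A Ap A0)
    (Useq : ℕ → Pt (N - 1) → ℝ) (hG : ∀ m, InGamma D (Useq m))
    (hJ : Tendsto (fun m => Jfun D A V (Useq m)) atTop (nhds (Theta D A V)))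
    (hbd : ∀ m, ∀ᵐ p ∂(volume.restrict (Omeg D)), -1 ≤ Useq m p ∧ Useq m p ≤ 1)
    (k : ℕ → ℤ) (hk : Tendsto k atTop atTop)
    (W : Pt (N - 1) → ℝ)
    (hweak : ∀ j : ℤ, WeakW12 (slab (j : ℝ) ((j : ℝ) + 1) D)
      (fun m => Ptr (-(k m)) (Useq m)) W)
    (hae : ∀ᵐ p ∂(volume.restrict (Omeg D)),
      Tendsto (fun m => Ptr (-(k m)) (Useq m) p) atTop (nhds (W p))) :
    Jfun D Ap V W ≤ Theta D A V :=
  statement18_general N D hD V hV A Ap A0 hA Useq hG hJ k hk W hweak hae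

end Het
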